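/- arXiv:2405.12446 — 4 statements merged into one kernel-verified Lean document; each statement's English description precedes it below -/
import Mathlib

section
/- Let a ∈ ℓ¹_ν with ν > 1, ω > 0, r = ln(ν)/ω, and 0 < σ < r. Define b_n = iωn a_n and ν̃ = e^{ω(r−σ)}. Then ‖b‖_{1,ν̃} ≤ (1/(eσ)) ‖a‖_{1,ν}. -/
/-!
Since `ν̃ = ν e^{-ωσ}`, `|b_n| ν̃^{|n|} = ω|n| e^{-ωσ|n|} · |a_n| ν^{|n|}`, and
`x e^{-σx} ≤ 1/(eσ)` for all `x` (the maximum of `y e^{-y}` is `e⁻¹`). Summing this termwise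
bound gives the estimate.
-/

open Real

lemma mul_exp_neg_mul_le {t : ℝ} (ht : 0 < t) (x : ℝ) :
    x * exp (-(t * x)) ≤ 1 / (exp 1 * t) := by
  rw [le_div_iff₀ (by positivity)]
  calc x * exp (-(t * x)) * (exp 1 * t) = t * x * exp (-(t * x)) * exp 1 := by ring
    _ ≤ exp (-1) * exp 1 := by gcongr; exact mul_exp_neg_le_exp_neg_one (t * x)
    _ = 1 := by rw [← exp_add]; simp

lemma exp_mul_log_div_sub {ν ω : ℝ} (hν : 0 < ν) (hω : ω ≠ 0) (σ : ℝ) :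
    exp (ω * (log ν / ω - σ)) = ν * exp (-(ω * σ)) := by
  rw [mul_sub, mul_div_cancel₀ _ hω, sub_eq_add_neg, exp_add, exp_log hν]

lemma norm_I_mul_mul_intCast_mul {ω : ℝ} (hω : 0 ≤ ω) (n : ℤ) (z : ℂ) :
    ‖Complex.I * (ω : ℂ) * (n : ℂ) * z‖ = ω * n.natAbs * ‖z‖ := by
  simp only [norm_mul, Complex.norm_I, Complex.norm_real, Real.norm_eq_abs, Complex.norm_intCast,
    one_mul, abs_of_nonneg hω, Nat.cast_natAbs, Int.cast_abs]

lemma summable_and_tsum_le_mul_of_le {ι : Type*} {f g : ι → ℝ} {C : ℝ}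
    (hf : ∀ i, 0 ≤ f i) (hfg : ∀ i, f i ≤ C * g i) (hg : Summable g) :
    Summable f ∧ ∑' i, f i ≤ C * ∑' i, g i := by
  have hf_sum : Summable f := (hg.mul_left C).of_nonneg_of_le hf hfg
  refine ⟨hf_sum, ?_⟩
  rw [← tsum_mul_left]
  exact hf_sum.tsum_le_tsum hfg (hg.mul_left C)

theorem cauchy_bound_fourier_coefficients_general (ν ω σ : ℝ) (hν : 1 < ν) (hω : 0 < ω)
    (hσ : 0 < σ) (a : ℤ → ℂ)
    (ha : Summable fun n : ℤ => ‖a n‖ * ν ^ n.natAbs) :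
    Summable (fun n : ℤ =>
      ‖Complex.I * (ω : ℂ) * (n : ℂ) * a n‖ *
        (Real.exp (ω * (Real.log ν / ω - σ))) ^ n.natAbs) ∧
    (∑' n : ℤ, ‖Complex.I * (ω : ℂ) * (n : ℂ) * a n‖ *
        (Real.exp (ω * (Real.log ν / ω - σ))) ^ n.natAbs) ≤
      (1 / (Real.exp 1 * σ)) * ∑' n : ℤ, ‖a n‖ * ν ^ n.natAbs := by
  refine summable_and_tsum_le_mul_of_le (fun n => by positivity) (fun n => ?_) ha
  have hx := mul_exp_neg_mul_le hσ (ω * n.natAbs)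
  rw [norm_I_mul_mul_intCast_mul hω.le, exp_mul_log_div_sub (by linarith) hω.ne', mul_pow,
    ← exp_nat_mul]
  calc ω * n.natAbs * ‖a n‖ * (ν ^ n.natAbs * exp (n.natAbs * -(ω * σ)))
      = ω * n.natAbs * exp (-(σ * (ω * n.natAbs))) * (‖a n‖ * ν ^ n.natAbs) := by ring_nf
    _ ≤ 1 / (exp 1 * σ) * (‖a n‖ * ν ^ n.natAbs) := by gcongr

/-- Cauchy bounds in sequence space: if `a ∈ ℓ¹_ν`, `r = log ν / ω`, `0 < σ < r`,
`b_n = iωn a_n` and `ν̃ = e^{ω(r-σ)}`, then `‖b‖_{1,ν̃} ≤ ‖a‖_{1,ν}/(eσ)`. -/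
theorem cauchy_bound_fourier_coefficients (ν ω σ : ℝ) (hν : 1 < ν) (hω : 0 < ω)
    (hσ : 0 < σ) (hσr : σ < Real.log ν / ω) (a : ℤ → ℂ)
    (ha : Summable fun n : ℤ => ‖a n‖ * ν ^ n.natAbs) :
    Summable (fun n : ℤ =>
      ‖Complex.I * (ω : ℂ) * (n : ℂ) * a n‖ *
        (Real.exp (ω * (Real.log ν / ω - σ))) ^ n.natAbs) ∧
    (∑' n : ℤ, ‖Complex.I * (ω : ℂ) * (n : ℂ) * a n‖ *
        (Real.exp (ω * (Real.log ν / ω - σ))) ^ n.natAbs) ≤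
      (1 / (Real.exp 1 * σ)) * ∑' n : ℤ, ‖a n‖ * ν ^ n.natAbs :=
  cauchy_bound_fourier_coefficients_general ν ω σ hν hω hσ a ha
end

section
/- Let f(z) = Σ_{n∈ℤ} a_n e^{iωnz} with a ∈ ℓ¹_ν, ν > 1, ω > 0, r = ln(ν)/ω, and 0 < σ < r. Then the derivative f′ satisfies sup_{z : |Im z| < r−σ} |f′(z)| ≤ (1/(eσ)) ‖a‖_{1,ν}. -/
/-!
Each mode `a n * exp (i ω n w)` is entire with derivative `i ω n a n exp (i ω n w)`. On the strip
`|Im w| < r - σ`, where `exp (ω r) = ν`, its modulus is at most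
`‖a n‖ ν^|n| · (ω|n|) exp (-σ ω|n|)`, and `x exp (-σ x) ≤ 1/(eσ)` for all real `x`. This bound is
summable, so the series may be differentiated termwise on the strip, and summing it gives the claim.
-/

open Complex

lemma Real.mul_exp_neg_mul_le {σ : ℝ} (hσ : 0 < σ) (x : ℝ) :
    x * Real.exp (-(σ * x)) ≤ 1 / (Real.exp 1 * σ) := by
  have h := Real.mul_exp_neg_le_exp_neg_one (σ * x)
  rw [Real.exp_neg 1, ← one_div, mul_assoc] at h
  rw [← div_div, le_div_iff₀ hσ, mul_comm]
  exact h

lemma Complex.norm_exp_I_mul_ofReal_mul_le (c : ℝ) (w : ℂ) :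
    ‖exp (I * c * w)‖ ≤ Real.exp (|c| * |w.im|) := by
  have hre : (I * c * w).re = -(c * w.im) := by simp
  rw [norm_exp, hre, Real.exp_le_exp, ← abs_mul]
  exact neg_le_abs _

lemma isOpen_setOf_abs_im_lt (h : ℝ) : IsOpen {w : ℂ | |w.im| < h} :=
  isOpen_lt (continuous_abs.comp continuous_im) continuous_const

lemma convex_setOf_abs_im_lt (h : ℝ) : Convex ℝ {w : ℂ | |w.im| < h} := by
  have : {w : ℂ | |w.im| < h} = imLm ⁻¹' Set.Ioo (-h) h := by
    ext w; simp [abs_lt]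
  rw [this]
  exact (convex_Ioo _ _).linear_preimage _

lemma Complex.hasDerivAt_exp_const_mul (c w : ℂ) :
    HasDerivAt (fun w => exp (c * w)) (exp (c * w) * c) w := by
  simpa using ((hasDerivAt_id w).const_mul c).cexp

lemma norm_deriv_fourierMode_le {ν ω σ : ℝ} (hν : 0 < ν) (hω : 0 < ω) (hσ : 0 < σ) (n : ℤ)
    {w : ℂ} (hw : |w.im| ≤ Real.log ν / ω - σ) :
    ‖exp (I * ω * n * w) * (I * ω * n)‖ ≤ ν ^ n.natAbs / (Real.exp 1 * σ) := by
  set k : ℝ := ω * n.natAbs with hk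
  have hk0 : 0 ≤ k := by positivity
  have hωn : |ω * (n : ℝ)| = k := by rw [hk, abs_mul, abs_of_pos hω, Nat.cast_natAbs, Int.cast_abs]
  have hfreq : ‖I * ω * n‖ = k := by
    rw [← hωn, mul_assoc, norm_mul, norm_I, one_mul, ← ofReal_intCast, ← ofReal_mul, norm_real,
      Real.norm_eq_abs]
  have hexp : ‖exp (I * ω * n * w)‖ ≤ ν ^ n.natAbs * Real.exp (-(σ * k)) := by
    have hνk : ν ^ n.natAbs = Real.exp (k * (Real.log ν / ω)) := by
      rw [← Real.exp_log (pow_pos hν _), Real.log_pow, hk]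
      congr 1
      field_simp
    calc ‖exp (I * ω * n * w)‖ = ‖exp (I * ((ω * n : ℝ) : ℂ) * w)‖ := by push_cast; ring_nf
      _ ≤ Real.exp (k * |w.im|) := hωn ▸ norm_exp_I_mul_ofReal_mul_le _ _
      _ ≤ Real.exp (k * (Real.log ν / ω - σ)) := by gcongr
      _ = ν ^ n.natAbs * Real.exp (-(σ * k)) := by rw [hνk, ← Real.exp_add]; ring_nf
  calc ‖exp (I * ω * n * w) * (I * ω * n)‖
      ≤ ν ^ n.natAbs * Real.exp (-(σ * k)) * k := by rw [norm_mul, hfreq]; gcongr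
    _ = ν ^ n.natAbs * (k * Real.exp (-(σ * k))) := by ring
    _ ≤ ν ^ n.natAbs * (1 / (Real.exp 1 * σ)) := by gcongr; exact Real.mul_exp_neg_mul_le hσ k
    _ = ν ^ n.natAbs / (Real.exp 1 * σ) := by ring

theorem fourier_series_derivative_bound_general (ν ω σ : ℝ) (hν : 1 < ν) (hω : 0 < ω)
    (hσ : 0 < σ) (a : ℤ → ℂ)
    (ha : Summable fun n : ℤ => ‖a n‖ * ν ^ n.natAbs) :
    ∀ z : ℂ, |z.im| < Real.log ν / ω - σ →
      ‖(deriv (fun w : ℂ => ∑' n : ℤ, a n * Complex.exp (Complex.I * (ω : ℂ) * (n : ℂ) * w)) z)‖ ≤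
      (1 / (Real.exp 1 * σ)) * ∑' n : ℤ, ‖a n‖ * ν ^ n.natAbs := by
  intro z hz
  set strip := {w : ℂ | |w.im| < Real.log ν / ω - σ}
  have hbound : ∀ n : ℤ, ∀ w ∈ strip, ‖a n * (exp (I * ω * n * w) * (I * ω * n))‖ ≤
      ‖a n‖ * ν ^ n.natAbs / (Real.exp 1 * σ) := fun n w hw => by
    rw [norm_mul, mul_div_assoc]
    gcongr
    exact norm_deriv_fourierMode_le (by linarith) hω hσ n hw.le
  have hsummable₀ : Summable fun n : ℤ => a n * exp (I * ω * n * 0) := by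
    simpa using ha.of_norm_bounded fun n => le_mul_of_one_le_right (norm_nonneg _)
      (one_le_pow₀ hν.le)
  have hderiv := hasDerivAt_tsum_of_isPreconnected (ha.div_const _)
    (isOpen_setOf_abs_im_lt _) (convex_setOf_abs_im_lt _).isPreconnected
    (fun n w _ => (hasDerivAt_exp_const_mul _ w).const_mul (a n)) hbound
    (show (0 : ℂ) ∈ strip by simpa [strip] using (abs_nonneg _).trans_lt hz) hsummable₀ hz
  rw [hderiv.deriv, one_div_mul_eq_div, ← tsum_div_const]
  exact tsum_of_norm_bounded (ha.div_const _).hasSum fun n => hbound n z hz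

/-- Cauchy bound for the derivative of an analytic Fourier series: giving up `σ` of the
width of the strip of analyticity yields the uniform derivative bound `‖a‖_{1,ν}/(eσ)`. -/
theorem fourier_series_derivative_bound (ν ω σ : ℝ) (hν : 1 < ν) (hω : 0 < ω)
    (hσ : 0 < σ) (hσr : σ < Real.log ν / ω) (a : ℤ → ℂ)
    (ha : Summable fun n : ℤ => ‖a n‖ * ν ^ n.natAbs) :
    ∀ z : ℂ, |z.im| < Real.log ν / ω - σ →
      ‖(deriv (fun w : ℂ => ∑' n : ℤ, a n * Complex.exp (Complex.I * (ω : ℂ) * (n : ℂ) * w)) z)‖ ≤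
      (1 / (Real.exp 1 * σ)) * ∑' n : ℤ, ‖a n‖ * ν ^ n.natAbs :=
  fourier_series_derivative_bound_general ν ω σ hν hω hσ a ha
end

section
/- Let f, λ (real, negative), and P be as in the invariance equation ∂_θ P(θ,σ) + λσ ∂_σ P(θ,σ) = f(P(θ,σ)), with P continuous on ℝ × [−τ,τ] and T-periodic in θ. Then γ(θ) = P(θ,0) is a T-periodic solution of γ′ = f(γ), and for each σ ∈ [−τ,τ], θ ∈ ℝ, one has ‖P(t+θ, σe^{λt}) − γ(t+θ)‖ → 0 as t → ∞. -/
/-!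
At `σ = 0` the invariance equation loses its `σ`-term, so `γ = P(·, 0)` solves `γ' = f(γ)`.
Along a whisker the second argument `σ e^{λt}` tends to `0`, and since `P` is continuous and
periodic in its first argument, hence uniformly continuous on a period strip, `P(a, s) → P(a, 0)`
as `s → 0` uniformly in `a`.
-/

open Filter Topology Function

theorem tendstoUniformly_of_continuous_of_periodic {X E : Type*}
    [UniformSpace X] [WeaklyLocallyCompactSpace X] [UniformSpace E]
    {F : ℝ → X → E} (hF : Continuous (uncurry F)) {T : ℝ} (hT : 0 < T)
    (hper : ∀ x, Periodic (F · x) T) (x₀ : X) :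
    TendstoUniformly (fun x a => F a x) (fun a => F a x₀) (𝓝 x₀) := by
  have hcompact :
      TendstoUniformly (fun x (a : Set.Icc 0 T) => F a x) (fun a => F a x₀) (𝓝 x₀) :=
    Continuous.tendstoUniformly _ (by fun_prop) x₀
  have hreduce : ∀ x a, F (toIcoMod hT 0 a) x = F a x := fun x a =>
    (hper x).sub_zsmul_eq _
  simpa only [comp_def, hreduce] using
    hcompact.comp fun a => ⟨toIcoMod hT 0 a, Set.Ico_subset_Icc_self (toIcoMod_mem_Ico' hT a)⟩

theorem tendsto_norm_sub_of_continuous_of_periodic {X α E : Type*}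
    [UniformSpace X] [WeaklyLocallyCompactSpace X] [SeminormedAddCommGroup E]
    {F : ℝ → X → E} (hF : Continuous (uncurry F)) {T : ℝ} (hT : 0 < T)
    (hper : ∀ x, Periodic (F · x) T) {l : Filter α} (a : α → ℝ) {x : α → X} {x₀ : X}
    (hx : Tendsto x l (𝓝 x₀)) :
    Tendsto (fun i => ‖F (a i) (x i) - F (a i) x₀‖) l (𝓝 0) := by
  have := (tendstoUniformly_iff_tendsto.1
    (tendstoUniformly_of_continuous_of_periodic hF hT hper x₀)).comp
    (hx.prodMk (tendsto_top (f := a)))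
  simpa [comp_def, dist_eq_norm', tendsto_uniformity_iff_dist_tendsto_zero] using this

theorem Real.tendsto_const_mul_exp_mul_atTop_of_neg {lam : ℝ} (hlam : lam < 0) (σ : ℝ) :
    Tendsto (fun t => σ * Real.exp (lam * t)) atTop (𝓝 0) := by
  simpa using (tendsto_exp_atBot.comp (tendsto_id.const_mul_atTop_of_neg hlam)).const_mul σ

theorem parameterization_whisker_accumulates_general {d : ℕ}
    (f : (Fin d → ℝ) → (Fin d → ℝ))
    (lam : ℝ) (hlam : lam < 0) (T τ : ℝ) (hT : 0 < T) (hτ : 0 < τ)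
    (P : ℝ → ℝ → (Fin d → ℝ))
    (hP : ContDiff ℝ 1 (fun p : ℝ × ℝ => P p.1 p.2))
    (hper : ∀ θ σ : ℝ, P (θ + T) σ = P θ σ)
    (hinv : ∀ θ : ℝ, ∀ σ ∈ Set.Icc (-τ) τ,
      deriv (fun t => P t σ) θ + (lam * σ) • deriv (fun s => P θ s) σ = f (P θ σ)) :
    (∀ θ : ℝ, HasDerivAt (fun t : ℝ => P t 0) (f (P θ 0)) θ) ∧
    (∀ θ : ℝ, P (θ + T) 0 = P θ 0) ∧
    (∀ σ ∈ Set.Icc (-τ) τ, ∀ θ : ℝ,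
      Filter.Tendsto (fun t : ℝ => ‖P (t + θ) (σ * Real.exp (lam * t)) - P (t + θ) 0‖)
        Filter.atTop (nhds 0)) := by
  refine ⟨fun θ => ?_, fun θ => hper θ 0, fun σ _ θ => ?_⟩
  · have hγ : DifferentiableAt ℝ (fun t => P t 0) θ :=
      (hP.differentiable one_ne_zero).differentiableAt.comp θ
        (differentiableAt_id.prodMk (differentiableAt_const 0))
    have hequator := hinv θ 0 ⟨by linarith, hτ.le⟩
    rw [mul_zero, zero_smul, add_zero] at hequator
    exact hequator ▸ hγ.hasDerivAt
  · exact tendsto_norm_sub_of_continuous_of_periodic hP.continuous hT (fun σ θ => hper θ σ)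
      (· + θ) (Real.tendsto_const_mul_exp_mul_atTop_of_neg hlam σ)

/-- The equator of the parameterized cylinder is a `T`-periodic orbit, and every whisker
accumulates on it: `‖P(t+θ, σe^{λt}) − γ(t+θ)‖ → 0` as `t → ∞`, where `γ(θ) = P(θ,0)`. -/
theorem parameterization_whisker_accumulates {d : ℕ} (U : Set (Fin d → ℝ)) (hU : IsOpen U)
    (f : (Fin d → ℝ) → (Fin d → ℝ)) (hf : ContDiffOn ℝ 1 f U)
    (lam : ℝ) (hlam : lam < 0) (T τ : ℝ) (hT : 0 < T) (hτ : 0 < τ)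
    (P : ℝ → ℝ → (Fin d → ℝ))
    (hP : ContDiff ℝ 1 (fun p : ℝ × ℝ => P p.1 p.2))
    (hPU : ∀ θ : ℝ, ∀ σ ∈ Set.Icc (-τ) τ, P θ σ ∈ U)
    (hper : ∀ θ σ : ℝ, P (θ + T) σ = P θ σ)
    (hinv : ∀ θ : ℝ, ∀ σ ∈ Set.Icc (-τ) τ,
      deriv (fun t => P t σ) θ + (lam * σ) • deriv (fun s => P θ s) σ = f (P θ σ)) :
    (∀ θ : ℝ, HasDerivAt (fun t : ℝ => P t 0) (f (P θ 0)) θ) ∧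
    (∀ θ : ℝ, P (θ + T) 0 = P θ 0) ∧
    (∀ σ ∈ Set.Icc (-τ) τ, ∀ θ : ℝ,
      Filter.Tendsto (fun t : ℝ => ‖P (t + θ) (σ * Real.exp (lam * t)) - P (t + θ) 0‖)
        Filter.atTop (nhds 0)) :=
  parameterization_whisker_accumulates_general f lam hlam T τ hT hτ P hP hper hinv
end

section
/- Consider the polynomial embedded Hill system x′=p, y′=q, p′=λ₂x+2q−xz³, q′=λ₁y−2p−yz³, z′=−z³(xp+yq) on ℝ⁵. If (x,y,p,q,z) is a solution with (x(0)²+y(0)²)·z(0)² = 1, z(0) > 0, and (x(t),y(t)) ≠ (0,0) for all t in the interval of existence, then (x(t)²+y(t)²)·z(t)² = 1 for all t; consequently z(t) = (x(t)²+y(t)²)^{−1/2}, and (x,y,p,q) solves the original Hill restricted four body problem x′=p, y′=q, p′=λ₂x+2q−x(x²+y²)^{−3/2}, q′=λ₁y−2p−y(x²+y²)^{−3/2}. -/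
/-!
Along a solution, `E = (x² + y²) z²` satisfies `E' = 2 z² (x p + y q) (1 - E)`, so `1 - E`
solves a scalar linear ODE with continuous coefficient; it vanishes at `0`, hence everywhere by
Grönwall's inequality. Then `z` never vanishes, so it keeps the sign of `z 0`, and
`z = (x² + y²)^{-1/2}` turns the `z³` terms into the Hill nonlinearity.
-/

open Set

section LinearODE

variable {E : Type*} [NormedAddCommGroup E] [NormedSpace ℝ E] {u : ℝ → E} {c : ℝ → ℝ}

theorem eq_zero_of_hasDerivAt_smul_self_of_eq_zero_right {a b : ℝ}
    (hc : ContinuousOn c (Icc a b)) (hu : ∀ t ∈ Icc a b, HasDerivAt u (c t • u t) t)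
    (ha : u a = 0) : ∀ t ∈ Icc a b, u t = 0 := by
  obtain ⟨K, hK⟩ := isCompact_Icc.exists_bound_of_continuousOn hc
  refine eq_zero_of_abs_deriv_le_mul_abs_self_of_eq_zero_right (K := K)
    (fun t ht => (hu t ht).continuousAt.continuousWithinAt)
    (fun t ht => (hu t (Ico_subset_Icc_self ht)).hasDerivWithinAt) ha fun t ht => ?_
  rw [norm_smul]
  exact mul_le_mul_of_nonneg_right (hK t (Ico_subset_Icc_self ht)) (norm_nonneg _)

theorem eq_zero_of_hasDerivAt_smul_self_of_eq_zero_left {a b : ℝ}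
    (hc : ContinuousOn c (Icc a b)) (hu : ∀ t ∈ Icc a b, HasDerivAt u (c t • u t) t)
    (hb : u b = 0) : ∀ t ∈ Icc a b, u t = 0 := by
  have hu_neg : ∀ t ∈ Icc (-b) (-a), HasDerivAt (fun s => u (-s)) ((-c (-t)) • u (-t)) t :=
    fun t ht => by
      simpa [neg_smul, Function.comp_def] using
        (hu (-t) (neg_mem_Icc_iff.2 ht)).scomp t (hasDerivAt_neg t)
  intro t ht
  simpa using eq_zero_of_hasDerivAt_smul_self_of_eq_zero_right
    (hc.comp continuousOn_neg fun _ => neg_mem_Icc_iff.2).neg hu_neg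
    (by simpa using hb) (-t) (neg_mem_Icc_iff.2 (by simpa using ht))

theorem Set.OrdConnected.eqOn_zero_of_hasDerivAt_smul_self {I : Set ℝ} (hI : I.OrdConnected)
    {t₀ : ℝ} (ht₀ : t₀ ∈ I) (hc : ContinuousOn c I)
    (hu : ∀ t ∈ I, HasDerivAt u (c t • u t) t) (h₀ : u t₀ = 0) :
    ∀ t ∈ I, u t = 0 := by
  intro t ht
  rcases le_total t₀ t with h | h
  · have hsub : Icc t₀ t ⊆ I := hI.out ht₀ ht
    exact eq_zero_of_hasDerivAt_smul_self_of_eq_zero_right (hc.mono hsub)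
      (fun s hs => hu s (hsub hs)) h₀ t (right_mem_Icc.2 h)
  · have hsub : Icc t t₀ ⊆ I := hI.out ht ht₀
    exact eq_zero_of_hasDerivAt_smul_self_of_eq_zero_left (hc.mono hsub)
      (fun s hs => hu s (hsub hs)) h₀ t (left_mem_Icc.2 h)

end LinearODE

theorem hasDerivAt_one_sub_sq_add_sq_mul_sq {x y p q z : ℝ → ℝ} {t : ℝ}
    (hx : HasDerivAt x (p t) t) (hy : HasDerivAt y (q t) t)
    (hz : HasDerivAt z (-(z t ^ 3) * (x t * p t + y t * q t)) t) :
    HasDerivAt (fun s => 1 - (x s ^ 2 + y s ^ 2) * z s ^ 2)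
      (-2 * z t ^ 2 * (x t * p t + y t * q t) * (1 - (x t ^ 2 + y t ^ 2) * z t ^ 2)) t := by
  refine ((((hx.fun_pow 2).fun_add (hy.fun_pow 2)).fun_mul (hz.fun_pow 2)).const_sub 1).congr_deriv
    ?_
  simp only [Nat.cast_ofNat, Nat.add_one_sub_one, pow_one]
  ring

theorem IsPreconnected.pos_of_ne_zero {I : Set ℝ} (hI : IsPreconnected I) {f : ℝ → ℝ}
    (hf : ContinuousOn f I) (hne : ∀ t ∈ I, f t ≠ 0) {t₀ : ℝ} (ht₀ : t₀ ∈ I)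
    (h₀ : 0 < f t₀) :
    ∀ t ∈ I, 0 < f t := by
  intro t ht
  by_contra! h
  obtain ⟨s, hs, hs0⟩ := hI.intermediate_value ht ht₀ hf ⟨h, h₀.le⟩
  exact hne s hs hs0

theorem Real.pow_eq_rpow_neg_div_two_of_mul_sq_eq_one {r z : ℝ} (hz : 0 < z)
    (h : r * z ^ 2 = 1) (n : ℕ) : z ^ n = r ^ (-(n : ℝ) / 2) := by
  rw [eq_inv_of_mul_eq_one_left h, ← Real.rpow_natCast z 2, ← Real.rpow_neg hz.le,
    ← Real.rpow_mul hz.le, ← Real.rpow_natCast]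
  congr 1
  ring

theorem polynomial_embedding_hill_general (lam1 lam2 : ℝ) (I : Set ℝ)
    (hIconn : I.OrdConnected) (hI0 : (0 : ℝ) ∈ I)
    (x y p q z : ℝ → ℝ)
    (hx : ∀ t ∈ I, HasDerivAt x (p t) t)
    (hy : ∀ t ∈ I, HasDerivAt y (q t) t)
    (hp : ∀ t ∈ I, HasDerivAt p (lam2 * x t + 2 * q t - x t * z t ^ 3) t)
    (hq : ∀ t ∈ I, HasDerivAt q (lam1 * y t - 2 * p t - y t * z t ^ 3) t)
    (hz : ∀ t ∈ I, HasDerivAt z (-(z t ^ 3) * (x t * p t + y t * q t)) t)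
    (h0 : (x 0 ^ 2 + y 0 ^ 2) * z 0 ^ 2 = 1) (hz0 : 0 < z 0) :
    ∀ t ∈ I,
      (x t ^ 2 + y t ^ 2) * z t ^ 2 = 1 ∧
      z t = (x t ^ 2 + y t ^ 2) ^ (-(1 : ℝ) / 2) ∧
      HasDerivAt x (p t) t ∧
      HasDerivAt y (q t) t ∧
      HasDerivAt p
        (lam2 * x t + 2 * q t - x t * (x t ^ 2 + y t ^ 2) ^ (-(3 : ℝ) / 2)) t ∧
      HasDerivAt q
        (lam1 * y t - 2 * p t - y t * (x t ^ 2 + y t ^ 2) ^ (-(3 : ℝ) / 2)) t := by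
  have hcont : ∀ {f f' : ℝ → ℝ}, (∀ t ∈ I, HasDerivAt f (f' t) t) →
      ContinuousOn f I :=
    fun hf t ht => (hf t ht).continuousAt.continuousWithinAt
  have hE : ∀ t ∈ I, (x t ^ 2 + y t ^ 2) * z t ^ 2 = 1 := by
    have hcoeff : ContinuousOn (fun t => -2 * z t ^ 2 * (x t * p t + y t * q t)) I := by
      have := hcont hx; have := hcont hy; have := hcont hp; have := hcont hq; have := hcont hz
      fun_prop
    have hzero := hIconn.eqOn_zero_of_hasDerivAt_smul_self hI0 hcoeff
      (fun t ht => hasDerivAt_one_sub_sq_add_sq_mul_sq (hx t ht) (hy t ht) (hz t ht))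
      (sub_eq_zero.2 h0.symm)
    exact fun t ht => (sub_eq_zero.1 (hzero t ht)).symm
  have hzpos : ∀ t ∈ I, 0 < z t :=
    hIconn.isPreconnected.pos_of_ne_zero (hcont hz)
      (fun t ht hzt => by simpa [hzt] using hE t ht) hI0 hz0
  intro t ht
  have hzpow := Real.pow_eq_rpow_neg_div_two_of_mul_sq_eq_one (hzpos t ht) (hE t ht)
  have hz3 : z t ^ 3 = (x t ^ 2 + y t ^ 2) ^ (-(3 : ℝ) / 2) := by exact_mod_cast hzpow 3
  refine ⟨hE t ht, by simpa using hzpow 1, hx t ht, hy t ht, ?_, ?_⟩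
  · simpa only [hz3] using hp t ht
  · simpa only [hz3] using hq t ht

/-- The constraint `(x²+y²)z² = 1` is preserved along orbits of the polynomial embedded
Hill system avoiding collision, so that `z = (x²+y²)^{-1/2}` and `(x,y,p,q)` solves the
original Hill restricted four body problem. -/
theorem polynomial_embedding_hill (lam1 lam2 : ℝ) (I : Set ℝ) (hIopen : IsOpen I)
    (hIconn : I.OrdConnected) (hI0 : (0 : ℝ) ∈ I)
    (x y p q z : ℝ → ℝ)
    (hx : ∀ t ∈ I, HasDerivAt x (p t) t)
    (hy : ∀ t ∈ I, HasDerivAt y (q t) t)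
    (hp : ∀ t ∈ I, HasDerivAt p (lam2 * x t + 2 * q t - x t * z t ^ 3) t)
    (hq : ∀ t ∈ I, HasDerivAt q (lam1 * y t - 2 * p t - y t * z t ^ 3) t)
    (hz : ∀ t ∈ I, HasDerivAt z (-(z t ^ 3) * (x t * p t + y t * q t)) t)
    (h0 : (x 0 ^ 2 + y 0 ^ 2) * z 0 ^ 2 = 1) (hz0 : 0 < z 0)
    (hne : ∀ t ∈ I, (x t, y t) ≠ (0, 0)) :
    ∀ t ∈ I,
      (x t ^ 2 + y t ^ 2) * z t ^ 2 = 1 ∧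
      z t = (x t ^ 2 + y t ^ 2) ^ (-(1 : ℝ) / 2) ∧
      HasDerivAt x (p t) t ∧
      HasDerivAt y (q t) t ∧
      HasDerivAt p
        (lam2 * x t + 2 * q t - x t * (x t ^ 2 + y t ^ 2) ^ (-(3 : ℝ) / 2)) t ∧
      HasDerivAt q
        (lam1 * y t - 2 * p t - y t * (x t ^ 2 + y t ^ 2) ^ (-(3 : ℝ) / 2)) t :=
  polynomial_embedding_hill_general lam1 lam2 I hIconn hI0 x y p q z hx hy hp hq hz h0 hz0
end
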